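/- arXiv:1104.4868 — 6 statements merged into one kernel-verified Lean document; each statement's English description precedes it below -/
import Mathlib

section
/- Let A be a commutative ring with a derivation ∂ : A → A, let n ≥ 2, and let B = A[t]/(t^n). For μ, ν in A[t]/(t^{n-1}) with ν a unit, define the A-algebra endomorphism φ_{μ,ν} of B by φ_{μ,ν}(a) = Σ_{i=0}^{n-1} (1/i!) (μt)^i ∂^i(a) for a ∈ A and φ_{μ,ν}(t) = νt (extended multiplicatively). Then φ_{μ,ν} is a well-defined ring homomorphism of B (i.e. the formula is additive, multiplicative, sends 1 to 1, and respects t^n = 0). -/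
open Polynomial

/-- The truncated polynomial ring `A[t]/(t^m)`. -/
abbrev TruncP (A : Type) [CommRing A] (m : ℕ) : Type :=
  Polynomial A ⧸ Ideal.span {(Polynomial.X : Polynomial A) ^ m}

/-- The class of `t` in `A[t]/(t^m)`. -/
noncomputable def tv (A : Type) [CommRing A] (m : ℕ) : TruncP A m :=
  Ideal.Quotient.mk _ Polynomial.X

/-- `φ` is the endomorphism `φ_{μ,ν}` of `B = A[t]/(t^n)` determined by
`φ(a) = ∑_{i<n} (1/i!) (μ t)^i ∂^i(a)` for `a ∈ A` and `φ(t) = ν t`. -/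
def IsPhi (A : Type) [CommRing A] [Algebra ℚ A] (D : Derivation ℚ A A) (n : ℕ)
    (μ ν : TruncP A n) (φ : TruncP A n →+* TruncP A n) : Prop :=
  φ (tv A n) = ν * tv A n ∧
  ∀ a : A, φ (algebraMap A (TruncP A n) a) =
    ∑ i ∈ Finset.range n, (i.factorial : ℚ)⁻¹ •
      ((μ * tv A n) ^ i * algebraMap A (TruncP A n) ((⇑D)^[i] a))

/-!
The Taylor map `a ↦ ∑ (∂ⁱ a / i!) Tⁱ` is a ring homomorphism `A → A⟦T⟧`: multiplicativity is the
Leibniz rule for `∂ᵏ (a b)`, once the binomial coefficients are absorbed into the factorials.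
Since `s = μ t` satisfies `sⁿ = 0`, evaluating the truncations of power series at `s` is a ring
homomorphism `A⟦T⟧ → B`. Their composite `F` is the prescribed map on `A`, and `F` together with
`ν t`, whose `n`-th power vanishes, extends to `B = A[t]/(tⁿ)`.
-/

open Finset PowerSeries

namespace Derivation

open scoped Nat

variable {R A : Type*} [CommRing R] [CommRing A] [Algebra R A] (D : Derivation R A A)

theorem iterate_map_mul (n : ℕ) (a b : A) :
    D^[n] (a * b) = ∑ ij ∈ antidiagonal n, n.choose ij.1 • (D^[ij.1] a * D^[ij.2] b) := by
  induction n with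
  | zero => simp
  | succ n ih =>
    rw [sum_antidiagonal_choose_succ_nsmul (fun i j => D^[i] a * D^[j] b) n]
    simp only [Function.iterate_succ_apply', ih, map_sum, map_nsmul, leibniz, smul_eq_mul,
      nsmul_add, sum_add_distrib, add_right_inj]
    refine sum_congr rfl fun ij hij => ?_
    rw [n.choose_symm_of_eq_add (mem_antidiagonal.1 hij).symm, mul_comm]

variable [Algebra ℚ A]

theorem inv_factorial_smul_iterate_map_mul (n : ℕ) (a b : A) :
    (n ! : ℚ)⁻¹ • D^[n] (a * b) =
      ∑ ij ∈ antidiagonal n, ((ij.1 ! : ℚ)⁻¹ • D^[ij.1] a) * ((ij.2 ! : ℚ)⁻¹ • D^[ij.2] b) := by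
  rw [iterate_map_mul, smul_sum]
  refine sum_congr rfl fun ⟨i, j⟩ hij => ?_
  obtain rfl : n = i + j := (mem_antidiagonal.1 hij).symm
  rw [smul_mul_smul_comm, ← Nat.cast_smul_eq_nsmul ℚ, smul_smul]
  congr 1
  field_simp
  norm_cast
  rw [Nat.choose_symm_add]
  exact Nat.add_choose_mul_factorial_mul_factorial i j

noncomputable def taylorSeries : A →+* A⟦X⟧ where
  toFun a := PowerSeries.mk fun i => (i ! : ℚ)⁻¹ • D^[i] a
  map_one' := by
    ext (_ | i)
    · simp
    · simp [Function.iterate_succ_apply, map_one_eq_zero]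
  map_mul' a b := by
    ext n
    simp only [coeff_mk, PowerSeries.coeff_mul, inv_factorial_smul_iterate_map_mul]
  map_zero' := by ext; simp
  map_add' a b := by ext; simp [iterate_map_add]

theorem coeff_taylorSeries (a : A) (i : ℕ) :
    coeff i (D.taylorSeries a) = (i ! : ℚ)⁻¹ • D^[i] a := by
  simp [taylorSeries]

end Derivation

namespace PowerSeries

variable {R S : Type*} [CommRing R] [CommRing S] (f : R →+* S) {n : ℕ}

theorem eval₂_trunc_coe_of_pow_eq_zero {s : S} (hs : s ^ n = 0) (p : R[X]) :
    (trunc n (p : R⟦X⟧)).eval₂ f s = p.eval₂ f s := by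
  obtain ⟨q, hq⟩ : Polynomial.X ^ n ∣ p - trunc n (p : R⟦X⟧) := by
    rw [Polynomial.X_pow_dvd_iff]
    intro d hd
    simp [coeff_trunc, hd]
  rw [← sub_eq_zero, ← Polynomial.eval₂_sub, ← neg_sub, Polynomial.eval₂_neg, hq,
    Polynomial.eval₂_mul, Polynomial.eval₂_X_pow, hs, zero_mul, neg_zero]

noncomputable def evalNilpotent (s : S) (hs : s ^ n = 0) : R⟦X⟧ →+* S where
  toFun g := (trunc n g).eval₂ f s
  map_one' := by
    rw [← Polynomial.coe_one, eval₂_trunc_coe_of_pow_eq_zero f hs, Polynomial.eval₂_one]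
  map_mul' g h := by
    rw [← trunc_trunc_mul_trunc, ← Polynomial.coe_mul, eval₂_trunc_coe_of_pow_eq_zero f hs,
      Polynomial.eval₂_mul]
  map_zero' := by simp
  map_add' g h := by simp [Polynomial.eval₂_add]

theorem evalNilpotent_apply {s : S} (hs : s ^ n = 0) (g : R⟦X⟧) :
    evalNilpotent f s hs g = ∑ i ∈ range n, f (coeff i g) * s ^ i :=
  eval₂_trunc_eq_sum_range s f n g

end PowerSeries

theorem mul_tv_pow_self {A : Type} [CommRing A] {m : ℕ} (x : TruncP A m) :
    (x * tv A m) ^ m = 0 := by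
  rw [mul_pow, tv, ← map_pow, Ideal.Quotient.eq_zero_iff_mem.2 (Ideal.mem_span_singleton_self _),
    mul_zero]

namespace TruncP

variable {A S : Type} [CommRing A] [CommRing S] {m : ℕ}

noncomputable def lift (f : A →+* S) (x : S) (hx : x ^ m = 0) : TruncP A m →+* S :=
  Ideal.Quotient.lift _ (Polynomial.eval₂RingHom f x) fun p hp => by
    obtain ⟨q, rfl⟩ := Ideal.mem_span_singleton.1 hp
    simp [hx]

theorem lift_tv (f : A →+* S) (x : S) (hx : x ^ m = 0) : lift f x hx (tv A m) = x :=
  Polynomial.eval₂_X f x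

theorem lift_algebraMap (f : A →+* S) (x : S) (hx : x ^ m = 0) (a : A) :
    lift f x hx (algebraMap A (TruncP A m) a) = f a :=
  Polynomial.eval₂_C f x

end TruncP

theorem phi_exists_general (A : Type) [CommRing A] [Algebra ℚ A] (D : Derivation ℚ A A)
    (n : ℕ) (μ ν : TruncP A n) :
    ∃ φ : TruncP A n →+* TruncP A n, IsPhi A D n μ ν φ := by
  let F : A →+* TruncP A n :=
    (evalNilpotent (algebraMap A _) (μ * tv A n) (mul_tv_pow_self μ)).comp D.taylorSeries
  refine ⟨TruncP.lift F (ν * tv A n) (mul_tv_pow_self ν), TruncP.lift_tv _ _ _, fun a => ?_⟩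
  rw [TruncP.lift_algebraMap, RingHom.comp_apply, evalNilpotent_apply]
  refine sum_congr rfl fun i _ => ?_
  rw [D.coeff_taylorSeries, map_rat_smul, smul_mul_assoc, mul_comm]

/-- the formula `φ_{μ,ν}` yields a well-defined ring homomorphism of
`B = A[t]/(t^n)`. -/
theorem phi_exists (A : Type) [CommRing A] [Algebra ℚ A] (D : Derivation ℚ A A)
    (n : ℕ) (hn : 2 ≤ n) (μ ν : TruncP A n) (hν : IsUnit ν) :
    ∃ φ : TruncP A n →+* TruncP A n, IsPhi A D n μ ν φ :=
  phi_exists_general A D n μ ν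
end

section
/- With notation as above (A a commutative Q-algebra with derivation ∂, B = A[t]/(t^n), φ_{μ,ν} the automorphism with φ_{μ,ν}(a) = Σ_i (1/i!)(μt)^i ∂^i(a), φ_{μ,ν}(t) = νt), the composition satisfies φ_{μ',ν'} ∘ φ_{μ,ν} = φ_{μ'',ν''} where μ'' = μ' + ν'·φ_{μ',ν'}(μ) and ν'' = ν'·φ_{μ',ν'}(ν). -/
open Polynomial

/-! On constants both sides are truncated Taylor sums `T_s f = ∑_{i<n} (1/i!) s^i f(i)`, with
`f(i) = ∂^i a` and `s` a multiple of `t`. Such a sum is `(exp (s • S) f)(0)` for the shift `S` on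
sequences `ℕ → B`, and `s • S` is nilpotent since `s^n = 0`. Hence
`exp ((x + y) • S) = exp (x • S) * exp (y • S)` gives `T_{x+y} f = T_x (i ↦ T_y (j ↦ f (j + i)))`,
and applying `φ'` to `φ(a) = T_{μt}(∂^• a)` produces exactly this right-hand side with
`x = ν' φ'(μ) t` and `y = μ' t`. -/

open Finset

section Shift

variable {B : Type*} [CommRing B]

def scaledShift (s : B) : Module.End B (ℕ → B) :=
  s • LinearMap.funLeft B B Nat.succ

theorem scaledShift_add (s r : B) : scaledShift (s + r) = scaledShift s + scaledShift r :=
  add_smul _ _ _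

theorem commute_scaledShift (s r : B) : Commute (scaledShift s) (scaledShift r) :=
  ((Commute.refl _).smul_left s).smul_right r

theorem scaledShift_pow_apply (s : B) (k : ℕ) (f : ℕ → B) :
    (scaledShift s ^ k) f = fun j => s ^ k * f (j + k) := by
  induction k generalizing f with
  | zero => simp
  | succ k ih =>
    ext j
    rw [pow_succ, Module.End.mul_apply, ih]
    simp [scaledShift, LinearMap.funLeft, pow_succ, Nat.succ_eq_add_one]
    ring_nf

theorem scaledShift_pow_eq_zero {N : ℕ} {s : B} (hs : s ^ N = 0) : scaledShift s ^ N = 0 := by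
  ext f j
  simp [scaledShift_pow_apply, hs]

end Shift

section Taylor

variable {B : Type*} [CommRing B] [Module ℚ B]

noncomputable def taylorSum (N : ℕ) (s : B) (f : ℕ → B) : B :=
  ∑ i ∈ range N, (i.factorial : ℚ)⁻¹ • (s ^ i * f i)

theorem map_taylorSum {C : Type*} [CommRing C] [Module ℚ C] (g : B →+* C) (N : ℕ) (s : B)
    (f : ℕ → B) : g (taylorSum N s f) = taylorSum N (g s) (fun i => g (f i)) := by
  simp [taylorSum, map_rat_smul]

theorem exp_scaledShift_apply {N : ℕ} {s : B} (hs : s ^ N = 0) (f : ℕ → B) :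
    IsNilpotent.exp (scaledShift s) f = fun i => taylorSum N s (fun j => f (i + j)) := by
  ext i
  simp [IsNilpotent.exp_eq_sum (scaledShift_pow_eq_zero hs), scaledShift_pow_apply, taylorSum,
    add_comm]

theorem taylorSum_add {N : ℕ} {x y : B} (hx : x ^ N = 0) (hy : y ^ N = 0) (hxy : (x + y) ^ N = 0)
    (f : ℕ → B) :
    taylorSum N (x + y) f = taylorSum N x (fun i => taylorSum N y (fun j => f (j + i))) := by
  have hexp := IsNilpotent.exp_add_of_commute (commute_scaledShift x y)
    ⟨N, scaledShift_pow_eq_zero hx⟩ ⟨N, scaledShift_pow_eq_zero hy⟩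
  rw [← scaledShift_add] at hexp
  have := congr_fun (congr($hexp f)) 0
  rw [Module.End.mul_apply, exp_scaledShift_apply hxy, exp_scaledShift_apply hy,
    exp_scaledShift_apply hx] at this
  simpa [add_comm] using this

theorem taylorSum_add_mul {N : ℕ} {t : B} (ht : t ^ N = 0) (c d : B) (f : ℕ → B) :
    taylorSum N ((c + d) * t) f =
      taylorSum N (c * t) (fun i => taylorSum N (d * t) (fun j => f (j + i))) := by
  have hmul (e : B) : (e * t) ^ N = 0 := by rw [mul_pow, ht, mul_zero]
  rw [add_mul]
  exact taylorSum_add (hmul c) (hmul d) (by rw [← add_mul]; exact hmul _) f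

end Taylor

theorem tv_pow_self (A : Type) [CommRing A] (n : ℕ) : tv A n ^ n = 0 := by
  rw [tv, ← map_pow, Ideal.Quotient.eq_zero_iff_mem]
  exact Ideal.subset_span rfl

theorem IsPhi.apply_algebraMap {A : Type} [CommRing A] [Algebra ℚ A] {D : Derivation ℚ A A}
    {n : ℕ} {μ ν : TruncP A n} {φ : TruncP A n →+* TruncP A n} (h : IsPhi A D n μ ν φ) (a : A) :
    φ (algebraMap A _ a) = taylorSum n (μ * tv A n) (fun i => algebraMap A _ (D^[i] a)) :=
  h.2 a

theorem phi_comp_general (A : Type) [CommRing A] [Algebra ℚ A] (D : Derivation ℚ A A)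
    (n : ℕ) (μ ν μ' ν' : TruncP A n)
    (φ φ' φ'' : TruncP A n →+* TruncP A n)
    (hφ : IsPhi A D n μ ν φ) (hφ' : IsPhi A D n μ' ν' φ')
    (hφ'' : IsPhi A D n (μ' + ν' * φ' μ) (ν' * φ' ν) φ'') :
    φ'.comp φ = φ'' := by
  refine Ideal.Quotient.ringHom_ext (Polynomial.ringHom_ext (fun a => ?_) ?_)
  · show φ' (φ (algebraMap A _ a)) = φ'' (algebraMap A _ a)
    calc φ' (φ (algebraMap A _ a))
        = taylorSum n (ν' * φ' μ * tv A n) (fun i => φ' (algebraMap A _ (D^[i] a))) := by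
          rw [hφ.apply_algebraMap, map_taylorSum, map_mul, hφ'.1, mul_left_comm, ← mul_assoc]
      _ = taylorSum n (ν' * φ' μ * tv A n)
            (fun i => taylorSum n (μ' * tv A n) (fun j => algebraMap A _ (D^[j + i] a))) := by
          simp only [hφ'.apply_algebraMap, ← Function.iterate_add_apply]
      _ = taylorSum n ((ν' * φ' μ + μ') * tv A n) (fun i => algebraMap A _ (D^[i] a)) :=
          (taylorSum_add_mul (tv_pow_self A n) _ _ (fun i => algebraMap A _ (D^[i] a))).symm
      _ = φ'' (algebraMap A _ a) := by rw [add_comm, hφ''.apply_algebraMap]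
  · show φ' (φ (tv A n)) = φ'' (tv A n)
    rw [hφ.1, map_mul, hφ'.1, hφ''.1]
    ring

/-- composition law `φ_{μ',ν'} ∘ φ_{μ,ν} = φ_{μ'',ν''}` with
`μ'' = μ' + ν'·φ_{μ',ν'}(μ)` and `ν'' = ν'·φ_{μ',ν'}(ν)`. -/
theorem phi_comp (A : Type) [CommRing A] [Algebra ℚ A] (D : Derivation ℚ A A)
    (n : ℕ) (hn : 2 ≤ n) (μ ν μ' ν' : TruncP A n) (hν : IsUnit ν) (hν' : IsUnit ν')
    (φ φ' φ'' : TruncP A n →+* TruncP A n)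
    (hφ : IsPhi A D n μ ν φ) (hφ' : IsPhi A D n μ' ν' φ')
    (hφ'' : IsPhi A D n (μ' + ν' * φ' μ) (ν' * φ' ν) φ'') :
    φ'.comp φ = φ'' :=
  phi_comp_general A D n μ ν μ' ν' φ φ' φ'' hφ hφ' hφ''
end

section
/- With the same notation, the inverse of φ_{μ,ν} is φ_{μ̄,ν̄}, where μ̄ = −φ_{μ,ν}^{-1}(μ/ν) and ν̄ = φ_{μ,ν}^{-1}(1/ν). In particular φ_{μ,ν} is an automorphism of B = A[t]/(t^n). -/
/-!
The endomorphism `φ = φ_{μ,ν}` preserves the `t`-adic filtration of `B` and acts on the graded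
piece `A tᵏ` as multiplication by `ν(0)ᵏ`, a unit; hence it is bijective. To identify its inverse `ψ`
it suffices to apply `φ` to the claimed formula for `ψ(a)`: for any `m`,
`φ (∑ (m t)ⁱ/i! ∂ⁱa) = ∑ ((μ + φ(m) ν) t)ᵏ/k! ∂ᵏa`, which is the law
`exp (x σ) exp (y σ) = exp ((x + y) σ)` for the shift `σ` on sequences and the nilpotent
coefficients `x = φ(m) ν t`, `y = μ t`. For `m = μ̄` the coefficient `μ + φ(μ̄) ν` vanishes.
-/

open Polynomial

open Finset

section ExpSum

variable {R : Type*} [CommRing R]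

variable (R) in
noncomputable def shift : Module.End R (ℕ → R) :=
  LinearMap.funLeft R R (· + 1)

theorem smul_shift_pow_apply (x : R) (i : ℕ) (g : ℕ → R) (k : ℕ) :
    ((x • shift R) ^ i) g k = x ^ i * g (k + i) := by
  induction i generalizing g with
  | zero => simp
  | succ i ih =>
    rw [pow_succ, Module.End.mul_apply, ih]
    simp [shift, LinearMap.funLeft_apply, pow_succ, mul_assoc, add_assoc]

theorem smul_shift_pow_eq_zero {n : ℕ} {x : R} (hx : x ^ n = 0) : (x • shift R) ^ n = 0 := by
  ext g k
  simp [smul_shift_pow_apply, hx]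

variable [Algebra ℚ R]

noncomputable def expSum (n : ℕ) (c : R) (f : ℕ → R) : R :=
  ∑ i ∈ range n, (i.factorial : ℚ)⁻¹ • (c ^ i * f i)

theorem expSum_zero_left {n : ℕ} (hn : 0 < n) (f : ℕ → R) : expSum n 0 f = f 0 := by
  rw [expSum, sum_eq_single_of_mem 0 (mem_range.2 hn) fun i _ hi => by
    rw [zero_pow hi, zero_mul, smul_zero]]
  simp

theorem exp_smul_shift_apply {n : ℕ} {x : R} (hx : x ^ n = 0) (g : ℕ → R) (k : ℕ) :
    IsNilpotent.exp (x • shift R) g k = expSum n x fun i => g (k + i) := by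
  rw [IsNilpotent.exp_eq_sum (smul_shift_pow_eq_zero hx), expSum]
  simp [LinearMap.sum_apply, smul_shift_pow_apply]

theorem expSum_expSum {n : ℕ} {x y : R} (hx : x ^ n = 0) (hy : y ^ n = 0)
    (hxy : (x + y) ^ n = 0) (f : ℕ → R) :
    (expSum n x fun i => expSum n y fun j => f (i + j)) = expSum n (x + y) f := by
  have hcomm : Commute (x • shift R) (y • shift R) := by
    rw [Commute, SemiconjBy, smul_mul_smul_comm, smul_mul_smul_comm, mul_comm x y]
  have hexp := IsNilpotent.exp_add_of_commute hcomm ⟨n, smul_shift_pow_eq_zero hx⟩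
    ⟨n, smul_shift_pow_eq_zero hy⟩
  rw [← add_smul] at hexp
  have h := congrFun (LinearMap.congr_fun hexp f) 0
  simp only [Module.End.mul_apply, exp_smul_shift_apply hx, exp_smul_shift_apply hy,
    exp_smul_shift_apply hxy, zero_add] at h
  exact h.symm

end ExpSum

section TruncP

variable {A : Type} [CommRing A] {n : ℕ}

theorem algebraMap_truncP (a : A) :
    algebraMap A (TruncP A n) a = Ideal.Quotient.mk _ (C a) := rfl

theorem tv_pow_eq_zero {k : ℕ} (h : n ≤ k) : tv A n ^ k = 0 := by
  rw [tv, ← map_pow, Ideal.Quotient.eq_zero_iff_mem, Ideal.mem_span_singleton]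
  exact pow_dvd_pow _ h

theorem mul_tv_pow_eq_zero (x : TruncP A n) : (x * tv A n) ^ n = 0 := by
  rw [mul_pow, tv_pow_eq_zero le_rfl, mul_zero]

theorem exists_tv_dvd_sub_algebraMap (x : TruncP A n) :
    ∃ a : A, tv A n ∣ x - algebraMap A (TruncP A n) a := by
  obtain ⟨p, rfl⟩ := Ideal.Quotient.mk_surjective x
  refine ⟨p.coeff 0, Ideal.Quotient.mk _ p.divX, ?_⟩
  rw [algebraMap_truncP, tv, ← map_mul, ← map_sub, sub_eq_iff_eq_add.2 (X_mul_divX_add p).symm]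

theorem eq_zero_of_tv_pow_mul_eq_zero {k : ℕ} (hk : k < n) {a : A} {y : TruncP A n}
    (h : tv A n ^ k * (algebraMap A (TruncP A n) a + tv A n * y) = 0) : a = 0 := by
  obtain ⟨q, rfl⟩ := Ideal.Quotient.mk_surjective y
  rw [algebraMap_truncP, tv, ← map_pow, ← map_mul, ← map_add, ← map_mul,
    Ideal.Quotient.eq_zero_iff_mem, Ideal.mem_span_singleton, X_pow_dvd_iff] at h
  simpa [coeff_X_pow_mul'] using h k hk

end TruncP

namespace IsPhi

variable {A : Type} [CommRing A] [Algebra ℚ A] {D : Derivation ℚ A A} {n : ℕ}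
  {μ ν : TruncP A n} {φ : TruncP A n →+* TruncP A n}

theorem tv_dvd_map_algebraMap_sub (hn : 0 < n) (hφ : IsPhi A D n μ ν φ) (a : A) :
    tv A n ∣ φ (algebraMap A (TruncP A n) a) - algebraMap A (TruncP A n) a := by
  obtain ⟨k, rfl⟩ := Nat.exists_eq_add_of_lt hn
  rw [hφ.2, sum_range_succ', pow_zero, one_mul, Function.iterate_zero_apply, Nat.factorial_zero,
    Nat.cast_one, inv_one, one_smul, add_sub_cancel_right]
  exact dvd_sum fun i _ => dvd_smul_of_dvd _ <|
    ((dvd_mul_left _ μ).trans (dvd_pow_self _ i.succ_ne_zero)).mul_right _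

theorem surjective (hn : 0 < n) (hν : IsUnit ν) (hφ : IsPhi A D n μ ν φ) :
    Function.Surjective φ := by
  set t := tv A n
  set w : TruncP A n := ↑hν.unit⁻¹
  suffices key : ∀ k j, n ≤ j + k → ∀ x, t ^ j * x ∈ φ.range by
    intro x
    simpa using key n 0 (by omega) x
  intro k
  induction k with
  | zero =>
    intro j hj x
    rw [show t ^ j = 0 from tv_pow_eq_zero hj, zero_mul]
    exact zero_mem _
  | succ k ih =>
    intro j hj x
    obtain ⟨a, y, hy⟩ := exists_tv_dvd_sub_algebraMap (w ^ j * x)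
    obtain ⟨z, hz⟩ := hφ.tv_dvd_map_algebraMap_sub hn a
    have hwj : (w * ν) ^ j = 1 := by rw [hν.val_inv_mul, one_pow]
    have hsplit : t ^ j * x = φ (t ^ j * algebraMap A _ a) + t ^ (j + 1) * (ν ^ j * (y - z)) := by
      rw [map_mul, map_pow, hφ.1]
      linear_combination (-(ν ^ j * t ^ j)) * hz + ν ^ j * t ^ j * hy - t ^ j * x * hwj
    rw [hsplit]
    exact add_mem (φ.mem_range_self _) (ih (j + 1) (by omega) _)

theorem injective (hn : 0 < n) (hν : IsUnit ν) (hφ : IsPhi A D n μ ν φ) :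
    Function.Injective φ := by
  set t := tv A n
  rw [injective_iff_map_eq_zero]
  intro x hx
  have key : ∀ k ≤ n, t ^ k ∣ x := by
    intro k
    induction k with
    | zero => simp
    | succ k ih =>
      intro hk
      obtain ⟨y, rfl⟩ := ih (by omega)
      obtain ⟨a, y', hy'⟩ := exists_tv_dvd_sub_algebraMap y
      obtain ⟨z, hz⟩ := hφ.tv_dvd_map_algebraMap_sub hn a
      have hφy : φ (t ^ k * y) =
          ν ^ k * (t ^ k * (algebraMap A _ a + t * (z + ν * φ y'))) := by
        rw [map_mul, map_pow, hφ.1, eq_add_of_sub_eq' hy', map_add, map_mul, hφ.1,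
          eq_add_of_sub_eq' hz]
        ring
      rw [hφy, (hν.pow k).mul_right_eq_zero] at hx
      rw [eq_zero_of_tv_pow_mul_eq_zero (by omega) hx, map_zero, sub_zero] at hy'
      exact ⟨y', by rw [hy', pow_succ, mul_assoc]⟩
  obtain ⟨y, rfl⟩ := key n le_rfl
  rw [tv_pow_eq_zero le_rfl, zero_mul]

theorem map_expSum (hφ : IsPhi A D n μ ν φ) (m : TruncP A n) (a : A) :
    φ (expSum n (m * tv A n) fun i => algebraMap A _ ((⇑D)^[i] a)) =
      expSum n ((μ + φ m * ν) * tv A n) fun i => algebraMap A _ ((⇑D)^[i] a) := by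
  have hterm : ∀ i, φ ((i.factorial : ℚ)⁻¹ • ((m * tv A n) ^ i * algebraMap A _ ((⇑D)^[i] a))) =
      (i.factorial : ℚ)⁻¹ • ((φ m * ν * tv A n) ^ i *
        expSum n (μ * tv A n) fun j => algebraMap A _ ((⇑D)^[i + j] a)) := by
    intro i
    rw [map_rat_smul, map_mul, map_pow, map_mul, hφ.1, hφ.2, ← mul_assoc]
    simp only [expSum, add_comm i, Function.iterate_add_apply]
  rw [expSum, map_sum]
  simp only [hterm]
  rw [← expSum, expSum_expSum (f := fun k => algebraMap A _ ((⇑D)^[k] a))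
    (mul_tv_pow_eq_zero _) (mul_tv_pow_eq_zero _) (by rw [← add_mul]; exact mul_tv_pow_eq_zero _),
    ← add_mul, add_comm]

end IsPhi

/-- the inverse of `φ_{μ,ν}` is `φ_{μ̄,ν̄}` with
`μ̄ = −φ_{μ,ν}⁻¹(μ/ν)`, `ν̄ = φ_{μ,ν}⁻¹(1/ν)`; in particular `φ_{μ,ν}` is an
automorphism of `B = A[t]/(t^n)`. -/
theorem phi_inv (A : Type) [CommRing A] [Algebra ℚ A] (D : Derivation ℚ A A)
    (n : ℕ) (hn : 2 ≤ n) (μ ν : TruncP A n) (hν : IsUnit ν)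
    (φ : TruncP A n →+* TruncP A n) (hφ : IsPhi A D n μ ν φ) :
    ∃ ψ : TruncP A n →+* TruncP A n,
      ψ.comp φ = RingHom.id _ ∧ φ.comp ψ = RingHom.id _ ∧
      IsPhi A D n (-(ψ (μ * ↑hν.unit⁻¹))) (ψ ↑hν.unit⁻¹) ψ := by
  have hn0 : 0 < n := by omega
  have hinj := hφ.injective hn0 hν
  let e := RingEquiv.ofBijective φ ⟨hinj, hφ.surjective hn0 hν⟩
  let ψ : TruncP A n →+* TruncP A n := e.symm
  have hφψ : ∀ x, φ (ψ x) = x := e.apply_symm_apply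
  have hν' : (↑hν.unit⁻¹ : TruncP A n) * ν = 1 := hν.val_inv_mul
  refine ⟨ψ, RingHom.ext e.symm_apply_apply, RingHom.ext hφψ, hinj ?_, fun a => hinj ?_⟩
  · rw [map_mul, hφψ, hφψ, hφ.1, ← mul_assoc, hν', one_mul]
  · change _ = φ (expSum n _ fun i => algebraMap A _ ((⇑D)^[i] a))
    have hμ : μ + -(μ * ↑hν.unit⁻¹) * ν = 0 := by linear_combination -μ * hν'
    rw [hφ.map_expSum, hφψ, map_neg, hφψ, hμ, zero_mul, expSum_zero_left hn0]
    rfl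
end

section
/- Let A be a local ring, n ≥ 3, R = A[t]/(t^{n-1}), and let 0 → A → N → R/(t^{n-2}) → 0 be a short exact sequence of R-modules corresponding to α ∈ A under the isomorphism Ext^1_R(R/(t^{n-2}), A) ≅ A. Then N is isomorphic to R as an R-module if and only if α is a unit of A. -/
/-!
Since `q e = 1` and `ker q = ι(A)`, the module `N` is generated by `e` and `ι(A)`, and
`t^{n-2} e = ι(α)`. If `α` is a unit then `ι(A) = R ι(α) ⊆ R e`, so `r ↦ r e` is onto; its
kernel is killed by `t^{n-1} = 0`. Conversely, the annihilator of `t` in `R` is `(t^{n-2})`;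
transported along `N ≅ R`, the element `ι(1)`, killed by `t`, is `t^{n-2} y`, and writing
`y = r e + ι(b)` gives `ι(1) = ι(r α)`, so `r α = 1`.
-/

open Polynomial

namespace TruncP

variable {A : Type} [CommRing A] {m : ℕ}

theorem tv_pow_self : tv A m ^ m = 0 := by
  rw [tv, ← map_pow, Ideal.Quotient.eq_zero_iff_mem]
  exact Ideal.mem_span_singleton_self _

theorem tv_pow_pred_dvd_of_tv_mul_eq_zero {z : TruncP A m} (hz : tv A m * z = 0) :
    tv A m ^ (m - 1) ∣ z := by
  obtain ⟨p, rfl⟩ := Ideal.Quotient.mk_surjective z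
  rw [tv, ← map_mul, Ideal.Quotient.eq_zero_iff_mem, Ideal.mem_span_singleton] at hz
  obtain ⟨g, hg⟩ := hz
  cases m with
  | zero => exact ⟨Ideal.Quotient.mk _ p, by simp⟩
  | succ j =>
    rw [pow_succ', mul_assoc] at hg
    exact ⟨Ideal.Quotient.mk _ g, by rw [tv, ← map_pow, ← map_mul, isRegular_X.left hg]; rfl⟩

end TruncP

section CyclicExtension

variable {R : Type*} [CommRing R] {t : R} {k : ℕ} {N : Type*} [AddCommGroup N] [Module R N]
  {ι : R ⧸ Ideal.span {t} →ₗ[R] N} {q : N →ₗ[R] R ⧸ Ideal.span {t ^ k}} {e : N}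
  {α : R ⧸ Ideal.span {t}}

theorem apply_smul_of_apply_eq_one (hqe : q e = Ideal.Quotient.mk _ 1) (r : R) :
    q (r • e) = Ideal.Quotient.mk _ r := by
  rw [map_smul, hqe, Algebra.smul_def, Ideal.Quotient.algebraMap_eq, ← map_mul, mul_one]

theorem exists_eq_smul_add_of_exact (hexact : LinearMap.range ι = LinearMap.ker q)
    (hqe : q e = Ideal.Quotient.mk _ 1) (x : N) : ∃ (r : R) (b : R ⧸ Ideal.span {t}),
      x = r • e + ι b := by
  obtain ⟨r, hr⟩ := Ideal.Quotient.mk_surjective (q x)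
  have hker : x - r • e ∈ LinearMap.ker q := by
    rw [LinearMap.mem_ker, map_sub, apply_smul_of_apply_eq_one hqe, hr, sub_self]
  obtain ⟨b, hb⟩ := hexact ▸ hker
  exact ⟨r, b, by rw [hb, add_sub_cancel]⟩

theorem injective_toSpanSingleton_of_isUnit (htk : t ^ (k + 1) = 0)
    (hι : Function.Injective ι) (hqe : q e = Ideal.Quotient.mk _ 1) (hte : t ^ k • e = ι α)
    (hα : IsUnit α) : Function.Injective (LinearMap.toSpanSingleton R N e) := by
  rw [injective_iff_map_eq_zero]
  intro r hr
  rw [LinearMap.toSpanSingleton_apply] at hr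
  obtain ⟨s, rfl⟩ : t ^ k ∣ r := by
    rw [← Ideal.mem_span_singleton, ← Ideal.Quotient.eq_zero_iff_mem,
      ← apply_smul_of_apply_eq_one hqe, hr, map_zero]
  have hsα : Ideal.Quotient.mk _ s * α = 0 := by
    apply hι
    rw [← Ideal.Quotient.algebraMap_eq, ← Algebra.smul_def, map_smul, ← hte, smul_smul,
      mul_comm, hr, map_zero]
  obtain ⟨c, rfl⟩ : t ∣ s := by
    rw [← Ideal.mem_span_singleton, ← Ideal.Quotient.eq_zero_iff_mem]
    exact hα.mul_left_eq_zero.mp hsα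
  rw [← mul_assoc, ← pow_succ, htk, zero_mul]

theorem surjective_toSpanSingleton_of_isUnit (hexact : LinearMap.range ι = LinearMap.ker q)
    (hqe : q e = Ideal.Quotient.mk _ 1) (hte : t ^ k • e = ι α) (hα : IsUnit α) :
    Function.Surjective (LinearMap.toSpanSingleton R N e) := by
  intro x
  obtain ⟨r, b, rfl⟩ := exists_eq_smul_add_of_exact hexact hqe x
  obtain ⟨c, hc⟩ := Ideal.Quotient.mk_surjective (b * ↑hα.unit⁻¹ : R ⧸ Ideal.span {t})
  have hb : b = c • α := by
    rw [Algebra.smul_def, Ideal.Quotient.algebraMap_eq, hc, mul_assoc, hα.val_inv_mul, mul_one]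
  refine ⟨r + c * t ^ k, ?_⟩
  rw [LinearMap.toSpanSingleton_apply, add_smul, mul_smul, hte, hb, map_smul]

theorem isUnit_of_linearEquiv (hk : k ≠ 0) (hann : ∀ z : R, t * z = 0 → t ^ k ∣ z)
    (hι : Function.Injective ι) (hexact : LinearMap.range ι = LinearMap.ker q)
    (hqe : q e = Ideal.Quotient.mk _ 1) (hte : t ^ k • e = ι α) (f : N ≃ₗ[R] R) :
    IsUnit α := by
  have htι : t • ι 1 = 0 := by
    rw [← map_smul, Algebra.smul_def, Ideal.Quotient.algebraMap_eq, mul_one,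
      Ideal.Quotient.eq_zero_iff_mem.mpr (Ideal.mem_span_singleton_self t), map_zero]
  obtain ⟨c, hc⟩ := hann (f (ι 1)) (by rw [← smul_eq_mul, ← map_smul, htι, map_zero])
  obtain ⟨r, b, hy⟩ := exists_eq_smul_add_of_exact hexact hqe (f.symm c)
  have htb : t ^ k • b = 0 := by
    obtain ⟨b, rfl⟩ := Ideal.Quotient.mk_surjective b
    rw [Algebra.smul_def, Ideal.Quotient.algebraMap_eq, ← map_mul,
      Ideal.Quotient.eq_zero_iff_mem]
    exact Ideal.mul_mem_right _ _ (Ideal.pow_mem_of_mem _ (Ideal.mem_span_singleton_self t) _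
      (Nat.pos_of_ne_zero hk))
  have hι1 : ι 1 = ι (r • α) := by
    calc ι 1 = t ^ k • f.symm c := by
          rw [← f.symm_apply_apply (ι 1), hc, ← smul_eq_mul, map_smul]
      _ = ι (r • α) := by
          rw [hy, smul_add, smul_comm, hte, ← map_smul ι (t ^ k) b, htb, map_zero,
            add_zero, map_smul]
  refine IsUnit.of_mul_eq_one (Ideal.Quotient.mk _ r) ?_
  rw [hι hι1, Algebra.smul_def, Ideal.Quotient.algebraMap_eq, mul_comm]

end CyclicExtension

theorem middle_free_iff_unit_general (A : Type) [CommRing A]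
    (n : ℕ) (hn : 3 ≤ n)
    (N : Type) [AddCommGroup N] [Module (TruncP A (n-1)) N]
    (ι : (TruncP A (n-1) ⧸ Ideal.span {tv A (n-1)}) →ₗ[TruncP A (n-1)] N)
    (q : N →ₗ[TruncP A (n-1)] (TruncP A (n-1) ⧸ Ideal.span {tv A (n-1) ^ (n-2)}))
    (hι : Function.Injective ι)
    (hexact : LinearMap.range ι = LinearMap.ker q)
    (α : TruncP A (n-1) ⧸ Ideal.span {tv A (n-1)})
    (hα : ∃ e : N, q e = Ideal.Quotient.mk _ 1 ∧ tv A (n-1) ^ (n-2) • e = ι α) :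
    Nonempty (N ≃ₗ[TruncP A (n-1)] TruncP A (n-1)) ↔ IsUnit α := by
  obtain ⟨e, hqe, hte⟩ := hα
  have htk : tv A (n-1) ^ (n - 2 + 1) = 0 := by
    rw [show n - 2 + 1 = n - 1 by omega, TruncP.tv_pow_self]
  have hann (z : TruncP A (n-1)) (hz : tv A (n-1) * z = 0) : tv A (n-1) ^ (n-2) ∣ z := by
    simpa only [show n - 1 - 1 = n - 2 by omega] using
      TruncP.tv_pow_pred_dvd_of_tv_mul_eq_zero hz
  refine ⟨fun ⟨f⟩ ↦ isUnit_of_linearEquiv (by omega) hann hι hexact hqe hte f, fun hu ↦ ?_⟩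
  exact ⟨(LinearEquiv.ofBijective _
    ⟨injective_toSpanSingleton_of_isUnit htk hι hqe hte hu,
      surjective_toSpanSingleton_of_isUnit hexact hqe hte hu⟩).symm⟩

/-- for `R = A[t]/(t^{n-1})` over a local ring `A`, if
`0 → A → N → R/(t^{n-2}) → 0` is a short exact sequence of `R`-modules (with
`A = R/(t)`) whose class in `Ext^1_R(R/(t^{n-2}), A) ≅ A` is `α` — concretely,
computed from the free resolution `··· → R →(·t) R →(·t^{n-2}) R → R/(t^{n-2}) → 0`,
`α` satisfies `t^{n-2}·e = ι(α)` for a lift `e ∈ N` of `1 ∈ R/(t^{n-2})` — then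
`N ≅ R` as `R`-modules if and only if `α` is a unit of `A = R/(t)`. -/
theorem middle_free_iff_unit (A : Type) [CommRing A] [IsLocalRing A]
    (n : ℕ) (hn : 3 ≤ n)
    (N : Type) [AddCommGroup N] [Module (TruncP A (n-1)) N]
    (ι : (TruncP A (n-1) ⧸ Ideal.span {tv A (n-1)}) →ₗ[TruncP A (n-1)] N)
    (q : N →ₗ[TruncP A (n-1)] (TruncP A (n-1) ⧸ Ideal.span {tv A (n-1) ^ (n-2)}))
    (hι : Function.Injective ι) (hq : Function.Surjective q)
    (hexact : LinearMap.range ι = LinearMap.ker q)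
    (α : TruncP A (n-1) ⧸ Ideal.span {tv A (n-1)})
    (hα : ∃ e : N, q e = Ideal.Quotient.mk _ 1 ∧ tv A (n-1) ^ (n-2) • e = ι α) :
    Nonempty (N ≃ₗ[TruncP A (n-1)] TruncP A (n-1)) ↔ IsUnit α :=
  middle_free_iff_unit_general A n hn N ι q hι hexact α hα
end

section
/- Module version of the extension lemma: let R be a commutative ring and G, F, E, U be R-modules with an exact sequence 0 → G ⊕ F →(β) E → U → 0. For ψ ∈ Hom_R(G, F) set E_ψ = coker(β ∘ (id_G, −ψ) : G → E). Then the class η(ψ) ∈ Ext^1_R(U, F) of the induced extension 0 → F → E_ψ → U → 0 satisfies η(ψ) − η(0) = ψ_*(σ_G), where σ_G ∈ Ext^1_R(U, G) is the G-component of the class of the given extension of U by G ⊕ F. -/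
/-!
Write `G ⊞ F = Γ ⊕ F`, where `Γ` is the graph of `-ψ`. Then `E_ψ` is the quotient of `E` by the
summand `β(Γ)`, and the projection `fst ≫ ψ + snd : G ⊞ F ⟶ F` along `Γ` extends to a morphism
of extensions from `E` to `E_ψ` that is the identity on `U`. Naturality of extension classes gives
`η(ψ) = σ ∘ (fst ≫ ψ + snd)`, which is affine in `ψ` with linear part `ψ_*(σ_G)`.
-/

open CategoryTheory CategoryTheory.Limits CategoryTheory.Abelian

noncomputable section

set_option maxHeartbeats 1000000
set_option synthInstance.maxHeartbeats 400000

variable {R : Type} [CommRing R]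

/-- Given an exact sequence `0 → G ⊕ F →(β) E → U → 0` of `R`-modules and
`ψ : G ⟶ F`, the induced short complex `0 → F → E_ψ → U → 0`, where
`E_ψ = coker(β ∘ (id_G, −ψ))`. -/
noncomputable def pushoutComplex {G F E U : ModuleCat.{0} R}
    (β : biprod G F ⟶ E) (p : E ⟶ U) (hw : β ≫ p = 0) (ψ : G ⟶ F) :
    ShortComplex (ModuleCat.{0} R) :=
  ShortComplex.mk
    (biprod.inr ≫ β ≫ cokernel.π (biprod.lift (𝟙 G) (-ψ) ≫ β))
    (cokernel.desc (biprod.lift (𝟙 G) (-ψ) ≫ β) p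
      (by rw [Category.assoc, hw, Limits.comp_zero]))
    (by
      simp only [Category.assoc, cokernel.π_desc]
      rw [hw, Limits.comp_zero])

open Category

namespace CategoryTheory.Limits.BinaryBicone

universe w v u

variable {C : Type u} [Category.{v} C] [Abelian C] {K B E U : C}

lemma snd_inr_comp_cokernel_π {c : BinaryBicone K B} (hc : c.IsBilimit) (β : c.pt ⟶ E) :
    c.snd ≫ c.inr ≫ β ≫ cokernel.π (c.inl ≫ β) = β ≫ cokernel.π (c.inl ≫ β) := by
  have h := IsBilimit.binary_total hc =≫ β ≫ cokernel.π (c.inl ≫ β)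
  rwa [Preadditive.add_comp, assoc c.fst, ← assoc c.inl, cokernel.condition, comp_zero, zero_add,
    id_comp, assoc] at h

variable (c : BinaryBicone K B) (β : c.pt ⟶ E) (p : E ⟶ U) (hw : β ≫ p = 0)

abbrev quotientShortComplex : ShortComplex C :=
  ShortComplex.mk (c.inr ≫ β ≫ cokernel.π (c.inl ≫ β))
    (cokernel.desc (c.inl ≫ β) p (by rw [assoc, hw, comp_zero]))
    (by rw [assoc, assoc, cokernel.π_desc, hw, comp_zero])

variable {c β p hw}

lemma mono_quotientShortComplex_f [Mono β] : Mono (c.quotientShortComplex β p hw).f := by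
  rw [Preadditive.mono_iff_cancel_zero]
  intro Z z hz
  have hlift := monoLift_comp (c.inl ≫ β) (z ≫ c.inr ≫ β) (by simp only [assoc]; exact hz)
  simp only [← assoc, cancel_mono] at hlift
  simpa using hlift.symm =≫ c.snd

lemma quotientShortComplex_shortExact (hc : c.IsBilimit)
    (hS : (ShortComplex.mk β p hw).ShortExact) : (c.quotientShortComplex β p hw).ShortExact := by
  have : Mono β := hS.mono_f
  have : Epi p := hS.epi_g
  have : Epi (c.quotientShortComplex β p hw).g :=
    epi_of_epi_fac (cokernel.π_desc _ p (by rw [assoc, hw, comp_zero]))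
  refine .mk' (ShortComplex.exact_of_g_is_cokernel _
    (CokernelCofork.IsColimit.ofπ' _ (c.quotientShortComplex β p hw).zero ?_))
    mono_quotientShortComplex_f this
  intro A k hk
  have hβk : β ≫ cokernel.π (c.inl ≫ β) ≫ k = 0 := by
    have hk' : c.inr ≫ β ≫ cokernel.π (c.inl ≫ β) ≫ k = 0 := by simpa using hk
    rw [← assoc, ← snd_inr_comp_cokernel_π hc, assoc, assoc, assoc, hk', comp_zero]
  refine ⟨hS.gIsCokernel.desc (CokernelCofork.ofπ _ hβk), ?_⟩
  rw [← cancel_epi (cokernel.π (c.inl ≫ β))]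
  simp only [cokernel.π_desc_assoc]
  exact Cofork.IsColimit.π_desc hS.gIsCokernel

lemma extClass_quotientShortComplex [HasExt.{w} C] (hc : c.IsBilimit)
    (hS : (ShortComplex.mk β p hw).ShortExact) (hT : (c.quotientShortComplex β p hw).ShortExact) :
    hT.extClass = hS.extClass.comp (Ext.mk₀ c.snd) (add_zero 1) := by
  let φ : ShortComplex.mk β p hw ⟶ c.quotientShortComplex β p hw :=
    { τ₁ := c.snd
      τ₂ := cokernel.π (c.inl ≫ β)
      τ₃ := 𝟙 U
      comm₁₂ := snd_inr_comp_cokernel_π hc β }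
  exact (Ext.mk₀_id_comp _).symm.trans (hS.extClass_naturality hT φ).symm

end CategoryTheory.Limits.BinaryBicone

namespace CategoryTheory.Limits.biprod

variable {C : Type*} [Category C] [Preadditive C] {X Y : C} [HasBinaryBiproduct X Y]

def negGraphBicone (ψ : X ⟶ Y) : BinaryBicone X Y where
  pt := X ⊞ Y
  fst := biprod.fst
  snd := biprod.fst ≫ ψ + biprod.snd
  inl := biprod.lift (𝟙 X) (-ψ)
  inr := biprod.inr

def negGraphBiconeIsBilimit (ψ : X ⟶ Y) : (negGraphBicone ψ).IsBilimit :=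
  have total : biprod.fst ≫ biprod.lift (𝟙 X) (-ψ) + (biprod.fst ≫ ψ + biprod.snd) ≫ biprod.inr =
      𝟙 (X ⊞ Y) := by
    apply biprod.hom_ext <;> simp [Preadditive.add_comp]
  isBinaryBilimitOfTotal _ total

end CategoryTheory.Limits.biprod

/-- module version of the extension lemma: with
`E_ψ = coker(β ∘ (id_G, −ψ))`, the sequence `0 → F → E_ψ → U → 0` is exact, and its
class `η(ψ) ∈ Ext^1_R(U, F)` satisfies `η(ψ) − η(0) = ψ_*(σ_G)`, where
`σ_G ∈ Ext^1_R(U, G)` is the `G`-component of the class of the given extension of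
`U` by `G ⊕ F`. -/
theorem eta_sub_eta_zero [HasExt.{0} (ModuleCat.{0} R)] {G F E U : ModuleCat.{0} R}
    (β : biprod G F ⟶ E) (p : E ⟶ U) (hw : β ≫ p = 0)
    (hS : (ShortComplex.mk β p hw).ShortExact) (ψ : G ⟶ F) :
    ∃ (hψ : (pushoutComplex β p hw ψ).ShortExact)
      (h0 : (pushoutComplex β p hw 0).ShortExact),
      Sub.sub (α := Ext U F 1) hψ.extClass h0.extClass =
        (hS.extClass.comp (Ext.mk₀ (biprod.fst : biprod G F ⟶ G))
          (add_zero 1)).comp (Ext.mk₀ ψ) (add_zero 1) := by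
  have hc := biprod.negGraphBiconeIsBilimit (X := G) (Y := F)
  -- `pushoutComplex β p hw ψ'` is definitionally `(negGraphBicone ψ').quotientShortComplex β p hw`.
  have hT (ψ' : G ⟶ F) : (pushoutComplex β p hw ψ').ShortExact :=
    BinaryBicone.quotientShortComplex_shortExact (hc ψ') hS
  have hclass (ψ' : G ⟶ F) : (hT ψ').extClass =
      hS.extClass.comp (Ext.mk₀ (biprod.fst ≫ ψ' + biprod.snd : G ⊞ F ⟶ F)) (add_zero 1) :=
    BinaryBicone.extClass_quotientShortComplex (hc ψ') hS (hT ψ')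
  refine ⟨hT ψ, hT 0, ?_⟩
  rw [hclass, hclass, comp_zero, zero_add, Ext.mk₀_add, Ext.comp_add,
    Ext.comp_assoc_of_second_deg_zero, Ext.mk₀_comp_mk₀]
  exact add_sub_cancel_right _ _
end
end

section
/- Let k be a field of characteristic 0, R_n = k[x][t]/(t^n), R_{n-1} = R_n/(t^{n-1}). The kernel of the canonical surjection Ω_{R_n/k} ⊗_{R_n} R_{n-1} → Ω_{R_{n-1}/k} is the free R_{n-1}/(t)-module (i.e. k[x]-module) of rank 1 generated by the class of t^{n-2} dt. -/
open Polynomial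

/-- `R_n = k[x][t]/(t^n)`. -/
abbrev Rn (k : Type) [Field k] (n : ℕ) : Type := TruncP (Polynomial k) n

/-- `R_{n-1} = R_n/(t^{n-1})`. -/
abbrev Rm (k : Type) [Field k] (n : ℕ) : Type :=
  Rn k n ⧸ Ideal.span {tv (Polynomial k) n ^ (n-1)}

/-- `Ω_{R_n/k} ⊗_{R_n} R_{n-1}`, realized as `Ω_{R_n/k}/(t^{n-1}·Ω_{R_n/k})`. -/
abbrev OmegaRestr (k : Type) [Field k] (n : ℕ) : Type :=
  Ω[(Rn k n)⁄k] ⧸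
    (Ideal.span {tv (Polynomial k) n ^ (n-1)} •
      (⊤ : Submodule (Rn k n) (Ω[(Rn k n)⁄k])))

/-- The canonical surjection `Ω_{R_n/k} ⊗ R_{n-1} → Ω_{R_{n-1}/k}`. -/
noncomputable def canSurj (k : Type) [Field k] (n : ℕ) :
    OmegaRestr k n →ₗ[Rn k n] Ω[(Rm k n)⁄k] :=
  Submodule.liftQ _ (KaehlerDifferential.map k k (Rn k n) (Rm k n))
    (by
      rw [Submodule.smul_le]
      rintro r hr m -
      rw [LinearMap.mem_ker, map_smul]
      obtain ⟨c, rfl⟩ := Ideal.mem_span_singleton'.mp hr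
      letI inst : Module (Rm k n) Ω[(Rm k n)⁄k] :=
        instModuleKaehlerDifferentialOfSMulCommClass (R' := Rm k n) k (Rm k n)
      have h := algebraMap_smul (Rm k n) (c * tv (Polynomial k) n ^ (n-1))
        (KaehlerDifferential.map k k (Rn k n) (Rm k n) m)
      rw [map_mul, Ideal.Quotient.algebraMap_eq, Ideal.Quotient.eq_zero_iff_mem.mpr
          (Ideal.mem_span_singleton_self _)] at h
      rw [← h]
      exact (congrArg (fun x : Rm k n => x • KaehlerDifferential.map k k (Rn k n) (Rm k n) m)
        (mul_zero (Ideal.Quotient.mk _ c : Rm k n))).trans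
        (@zero_smul (Rm k n) _ _ _ (@MulActionWithZero.toSMulWithZero _ _ _ _
          (@Module.toMulActionWithZero _ _ _ _ inst)) (KaehlerDifferential.map k k (Rn k n) (Rm k n) m)))

/-- The class of `t^{n-2} dt` in `Ω_{R_n/k} ⊗ R_{n-1}`. -/
noncomputable def genClass (k : Type) [Field k] (n : ℕ) : OmegaRestr k n :=
  Submodule.Quotient.mk (tv (Polynomial k) n ^ (n-2) •
    KaehlerDifferential.D k (Rn k n) (tv (Polynomial k) n))

/-!
By the conormal sequence of `R_n → R_{n-1} = R_n/(t^{n-1})`, the kernel is spanned by the class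
of `d(t^{n-1}) = (n-1) t^{n-2} dt`, and `n - 1` is invertible in characteristic zero. The
annihilator of `t^{n-2} dt` contains `t` since `t^{n-1}` vanishes in `R_{n-1}`. Conversely,
`d/dt : R_n → R_{n-1}` is a derivation, so it induces an `R_n`-linear map
`Ω_{R_n} ⊗ R_{n-1} → R_{n-1}` sending `t^{n-2} dt` to `t^{n-2}`; hence `r t^{n-2} dt = 0` forces
`r t^{n-2} ∈ (t^{n-1})`, that is, `t ∣ r`.
-/

section DerivationQuotient

variable {R A M : Type*} [CommRing R] [CommRing A] [Algebra R A] {I : Ideal A}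
  [AddCommGroup M] [Module A M] [Module (A ⧸ I) M] [IsScalarTower A (A ⧸ I) M]
  [Module R M]

def Derivation.liftQuotient (d : Derivation R A M) (hd : ∀ a ∈ I, d a = 0) :
    Derivation R (A ⧸ I) M where
  toLinearMap := (I.restrictScalars R).liftQ d.toLinearMap hd
  map_one_eq_zero' := d.map_one_eq_zero
  leibniz' a b := by
    obtain ⟨a, rfl⟩ := Ideal.Quotient.mk_surjective a
    obtain ⟨b, rfl⟩ := Ideal.Quotient.mk_surjective b
    change d (a * b) = Ideal.Quotient.mk I a • d b + Ideal.Quotient.mk I b • d a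
    rw [← Ideal.Quotient.algebraMap_eq, algebraMap_smul, algebraMap_smul, d.leibniz]

@[simp]
lemma Derivation.liftQuotient_mk (d : Derivation R A M) (hd : ∀ a ∈ I, d a = 0) (a : A) :
    d.liftQuotient hd (Ideal.Quotient.mk I a) = d a :=
  rfl

end DerivationQuotient

lemma Ideal.smul_eq_zero_of_mem {S N : Type*} [CommRing S] {I : Ideal S}
    [AddCommGroup N] [Module S N] [Module (S ⧸ I) N] [IsScalarTower S (S ⧸ I) N] {a : S}
    (ha : a ∈ I) (x : N) : a • x = 0 := by
  rw [← algebraMap_smul (S ⧸ I), Ideal.Quotient.algebraMap_eq,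
    Ideal.Quotient.eq_zero_iff_mem.mpr ha, zero_smul]

lemma Ideal.smul_top_le_ker_of_quotient {S M N : Type*} [CommRing S] {I : Ideal S}
    [AddCommGroup M] [Module S M] [AddCommGroup N] [Module S N] [Module (S ⧸ I) N]
    [IsScalarTower S (S ⧸ I) N] (f : M →ₗ[S] N) : I • ⊤ ≤ LinearMap.ker f := by
  rw [Submodule.smul_le]
  intro r hr m _
  rw [LinearMap.mem_ker, map_smul, Ideal.smul_eq_zero_of_mem hr]

section Conormal

open KaehlerDifferential TensorProduct

variable (k : Type*) {S : Type*} [CommRing k] [CommRing S] [Algebra k S] (f : S)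

lemma range_kerCotangentToTensor_span_singleton :
    LinearMap.range (kerCotangentToTensor k S (S ⧸ Ideal.span {f})) =
      Submodule.span S {(1 : S ⧸ Ideal.span {f}) ⊗ₜ[S] D k S f} := by
  have hf : f ∈ RingHom.ker (algebraMap S (S ⧸ Ideal.span {f})) := by
    rw [Ideal.Quotient.algebraMap_eq, Ideal.mk_ker]
    exact Ideal.mem_span_singleton_self f
  apply le_antisymm
  · rintro _ ⟨x, rfl⟩
    obtain ⟨⟨a, ha⟩, rfl⟩ := Ideal.toCotangent_surjective _ x
    rw [Ideal.Quotient.algebraMap_eq, Ideal.mk_ker] at ha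
    obtain ⟨c, rfl⟩ := Ideal.mem_span_singleton'.mp ha
    have : (⟨c * f, _⟩ : RingHom.ker (algebraMap S (S ⧸ Ideal.span {f}))) = c • ⟨f, hf⟩ := rfl
    rw [this, map_smul, map_smul, kerCotangentToTensor_toCotangent]
    exact Submodule.smul_mem _ _ (Submodule.mem_span_singleton_self _)
  · rw [Submodule.span_le, Set.singleton_subset_iff]
    exact ⟨Ideal.toCotangent _ ⟨f, hf⟩, kerCotangentToTensor_toCotangent _ _ _ _⟩

lemma ker_liftQ_map_quotient_span_singleton
    (h : Ideal.span {f} • ⊤ ≤ LinearMap.ker (map k k S (S ⧸ Ideal.span {f}))) :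
    LinearMap.ker ((Ideal.span {f} • ⊤ : Submodule S Ω[S⁄k]).liftQ
        (map k k S (S ⧸ Ideal.span {f})) h) =
      Submodule.span S {Submodule.Quotient.mk (D k S f)} := by
  set e := quotTensorEquivQuotSMul Ω[S⁄k] (Ideal.span {f})
  have hcomp : (Ideal.span {f} • ⊤ : Submodule S Ω[S⁄k]).liftQ
      (map k k S (S ⧸ Ideal.span {f})) h =
      (mapBaseChange k S (S ⧸ Ideal.span {f})).restrictScalars S ∘ₗ e.symm.toLinearMap := by
    ext ω
    simp [e, quotTensorEquivQuotSMul_symm_mk]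
  rw [hcomp, LinearMap.ker_comp, LinearMap.ker_restrictScalars,
    ← range_kerCotangentToTensor k S _ Ideal.Quotient.mk_surjective,
    range_kerCotangentToTensor_span_singleton, Submodule.comap_equiv_eq_map_symm,
    Submodule.map_span, Set.image_singleton, LinearEquiv.coe_coe, LinearEquiv.symm_symm,
    quotTensorEquivQuotSMul_mk_one_tmul]

end Conormal

section Truncated

variable (A : Type) [CommRing A] (m : ℕ)

lemma tv_pow_eq_mk (j : ℕ) : tv A m ^ j = Ideal.Quotient.mk _ (X ^ j) := by
  rw [tv, map_pow]

lemma X_pow_smul_trunc_eq_zero {j : ℕ} (hj : m - 1 ≤ j)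
    (q : TruncP A m ⧸ Ideal.span {tv A m ^ (m - 1)}) : (X ^ j : A[X]) • q = 0 := by
  rw [← algebraMap_smul (TruncP A m), Ideal.Quotient.algebraMap_eq, ← tv_pow_eq_mk]
  exact Ideal.smul_eq_zero_of_mem
    (Ideal.mem_span_singleton.mpr (pow_dvd_pow _ hj)) q

/-- `d/dt` on `A[t]/(t^m)` is only well defined modulo `t^(m-1)`, as `d(t^m) = m t^(m-1)`. -/
noncomputable def truncDerivative :
    Derivation A (TruncP A m) (TruncP A m ⧸ Ideal.span {tv A m ^ (m - 1)}) :=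
  (mkDerivation A 1).liftQuotient (by
    intro p hp
    obtain ⟨c, rfl⟩ := Ideal.mem_span_singleton'.mp hp
    rw [Derivation.leibniz, Derivation.leibniz_pow, X_pow_smul_trunc_eq_zero A m le_rfl,
      X_pow_smul_trunc_eq_zero A m (Nat.sub_le m 1), smul_zero, smul_zero, add_zero])

lemma truncDerivative_tv : truncDerivative A m (tv A m) = 1 :=
  (Derivation.liftQuotient_mk _ _ X).trans (mkDerivation_X A _)

lemma mem_span_tv_of_mul_tv_pow_mem {j : ℕ} (hj : j < m) {r : TruncP A m}
    (hr : r * tv A m ^ j ∈ Ideal.span {tv A m ^ (j + 1)}) : r ∈ Ideal.span {tv A m} := by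
  obtain ⟨p, rfl⟩ := Ideal.Quotient.mk_surjective r
  obtain ⟨c, hc⟩ := Ideal.mem_span_singleton'.mp hr
  obtain ⟨q, rfl⟩ := Ideal.Quotient.mk_surjective c
  rw [tv_pow_eq_mk, tv_pow_eq_mk, ← map_mul, ← map_mul, Ideal.Quotient.eq,
    Ideal.mem_span_singleton] at hc
  have hXj : X ^ (j + 1) ∣ p * X ^ j := by
    have := (pow_dvd_pow (X : A[X]) hj).trans hc
    simpa using (dvd_mul_left _ q).sub this
  have hX : X ∣ p := by
    rw [X_dvd_iff, ← coeff_mul_X_pow p j 0, zero_add]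
    exact X_pow_dvd_iff.mp hXj j (by omega)
  obtain ⟨s, rfl⟩ := hX
  rw [map_mul]
  exact Ideal.mul_mem_right _ _ (Ideal.mem_span_singleton_self _)

end Truncated

section Restriction

open KaehlerDifferential

variable (k : Type) [Field k] (n : ℕ)

lemma smul_genClass_eq_zero_iff (hn : 2 ≤ n) (r : Rn k n) :
    r • genClass k n = 0 ↔ r ∈ Ideal.span {tv k[X] n} := by
  have hpow : tv k[X] n ^ (n - 2 + 1) = tv k[X] n ^ (n - 1) := by
    congr 1
    omega
  rw [genClass, ← Submodule.Quotient.mk_smul, Submodule.Quotient.mk_eq_zero,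
    ← mul_smul r (tv k[X] n ^ (n - 2)) (D k (Rn k n) (tv k[X] n))]
  constructor
  · intro h
    let δ := ((truncDerivative k[X] n).restrictScalars k).liftKaehlerDifferential
    have h0 := Ideal.smul_top_le_ker_of_quotient δ h
    rw [LinearMap.mem_ker, map_smul, Derivation.liftKaehlerDifferential_comp_D,
      Derivation.restrictScalars_apply, truncDerivative_tv] at h0
    change Ideal.Quotient.mk _ (r * tv k[X] n ^ (n - 2) * 1) = 0 at h0
    rw [mul_one, Ideal.Quotient.eq_zero_iff_mem, ← hpow] at h0
    exact mem_span_tv_of_mul_tv_pow_mem k[X] n (by omega) h0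
  · intro h
    obtain ⟨c, rfl⟩ := Ideal.mem_span_singleton'.mp h
    rw [mul_assoc, ← pow_succ', hpow]
    exact Submodule.smul_mem_smul (Ideal.mul_mem_left _ _ (Ideal.mem_span_singleton_self _))
      Submodule.mem_top

lemma isUnit_natCast_pred [CharZero k] (hn : 2 ≤ n) : IsUnit ((n - 1 : ℕ) : Rn k n) := by
  rw [← map_natCast (algebraMap k (Rn k n))]
  exact (isUnit_iff_ne_zero.mpr (Nat.cast_ne_zero.mpr (by omega))).map _

lemma ker_canSurj [CharZero k] (hn : 2 ≤ n) :
    LinearMap.ker (canSurj k n) = Submodule.span (Rn k n) {genClass k n} := by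
  have hD : Submodule.Quotient.mk (D k (Rn k n) (tv k[X] n ^ (n - 1))) =
      ((n - 1 : ℕ) : Rn k n) • genClass k n := by
    rw [Derivation.leibniz_pow, show n - 1 - 1 = n - 2 by omega, genClass,
      Nat.cast_smul_eq_nsmul, Submodule.Quotient.mk_smul]
  rw [canSurj, ker_liftQ_map_quotient_span_singleton, hD,
    Submodule.span_singleton_smul_eq (isUnit_natCast_pred k n hn)]

end Restriction

/-- the kernel of the canonical surjection
`Ω_{R_n/k} ⊗_{R_n} R_{n-1} → Ω_{R_{n-1}/k}` is the free `R_{n-1}/(t)`-module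
(i.e. `k[x]`-module) of rank one generated by the class of `t^{n-2} dt`:
it equals the span of this class, and the annihilator of the generator is
exactly `(t)`. -/
theorem kernel_of_canonical_surjection (k : Type) [Field k] [CharZero k]
    (n : ℕ) (hn : 3 ≤ n) :
    LinearMap.ker (canSurj k n) =
      Submodule.span (Rn k n) {genClass k n} ∧
    ∀ r : Rn k n,
      r • genClass k n = 0 ↔ r ∈ Ideal.span {tv (Polynomial k) n} :=
  ⟨ker_canSurj k n (by omega), smul_genClass_eq_zero_iff k n (by omega)⟩
end
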